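/- arXiv:2509.04612 — 3 statements merged into one kernel-verified Lean document; each statement's English description precedes it below -/
import Mathlib

section
/- Let γ: ℝ → ℝ be a continuous T-periodic function and suppose p ∈ C¹_T(ℝ) satisfies p'(t) > p(t)² + γ(t) for all t ∈ ℝ. Then the equation x' = x² + γ(t) has exactly two T-periodic solutions φ⁻ and φ⁺; they satisfy φ⁻(t) < p(t) < φ⁺(t) for all t, and ∫₀ᵀ φ⁻(t) dt < 0 < ∫₀ᵀ φ⁺(t) dt. -/
/-
Truncating `x²` outside a large interval `[-R, R]` makes the equation globally Lipschitz, so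
its solutions exist on a whole period. The constant `-R` and `p` are strict lower and upper
solutions, hence the period map sends `[-R, p 0]` into itself and has a fixed point: a periodic
solution `φ⁻` squeezed between them, which stays below `p` strictly because `p - φ⁻ ≥ 0` cannot
have a zero minimum. The reflection `x(t) ↦ -x(-t)` produces `φ⁺ > p` in the same way.

If `x ≠ y` solve the equation then `(y - x)' = (x + y) (y - x)`, so integrating the logarithmic
derivative of `y - x` over a period gives `∫ (x + y) = 0`; with `p` in place of `y` the same
computation becomes strict and gives `∫ (φ⁻ + p) < 0 < ∫ (φ⁺ + p)`. Together these force
`∫ φ⁻ < 0 < ∫ φ⁺`. A third periodic solution would, by uniqueness for the initial value problem,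
meet neither `φ⁻` nor `φ⁺`, so its integral would equal both `-∫ φ⁻` and `-∫ φ⁺`.
-/

open Set Filter Topology Function
open scoped NNReal

lemma Function.Periodic.exists_abs_le {f : ℝ → ℝ} {T : ℝ} (hf : Periodic f T) (hT : T ≠ 0)
    (hc : Continuous f) : ∃ R : ℝ≥0, ∀ t, |f t| ≤ R := by
  obtain ⟨C, hC⟩ := (hf.isBounded_of_continuous hT hc).exists_norm_le
  exact ⟨C.toNNReal, fun t => (hC _ (mem_range_self t)).trans (Real.le_coe_toNNReal C)⟩

lemma Function.Periodic.comp_neg {f : ℝ → ℝ} {c : ℝ} (hf : Periodic f c) :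
    Periodic (fun t => f (-t)) c := fun t => by
  simpa only [neg_add] using hf.neg (-t)

lemma Function.Periodic.apply_toIcoMod {α : Type*} {f : ℝ → α} {c : ℝ} (hf : Periodic f c)
    (hc : 0 < c) (t : ℝ) : f (toIcoMod hc 0 t) = f t := by
  rw [← self_sub_toIcoDiv_zsmul, hf.sub_zsmul_eq]

lemma HasDerivAt.neg_comp_neg {f : ℝ → ℝ} {f' t : ℝ} (hf : HasDerivAt f f' (-t)) :
    HasDerivAt (fun s => -f (-s)) f' t := by
  have h := (hf.comp t (hasDerivAt_neg t)).neg
  rwa [mul_neg_one, neg_neg] at h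

section ODE

variable {E : Type*} [NormedAddCommGroup E] [NormedSpace ℝ E]

lemma continuous_of_forall_hasDerivAt {f f' : ℝ → E} (h : ∀ t, HasDerivAt f (f' t) t) :
    Continuous f :=
  continuous_iff_continuousAt.2 fun t => (h t).continuousAt

lemma HasDerivWithinAt.Ici_of_Icc {f : ℝ → E} {f' : E} {a b t : ℝ}
    (h : HasDerivWithinAt f f' (Icc a b) t) (ht : t ∈ Ico a b) :
    HasDerivWithinAt f f' (Ici t) t :=
  (h.mono (Icc_subset_Icc_left ht.1)).mono_of_mem_nhdsWithin (Icc_mem_nhdsGE ht.2)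

lemma exists_forall_mem_Icc_hasDerivWithinAt_of_lipschitzWith [CompleteSpace E]
    {F : ℝ → E → E} {K C : ℝ≥0} {a b : ℝ} (hab : a ≤ b) (hlip : ∀ t, LipschitzWith K (F t))
    (hcont : ∀ x, Continuous (F · x)) (hbdd : ∀ t x, ‖F t x‖ ≤ C) (x₀ : E) :
    ∃ α : ℝ → E, α a = x₀ ∧ ∀ t ∈ Icc a b, HasDerivWithinAt α (F t (α t)) (Icc a b) t :=
  IsPicardLindelof.exists_eq_forall_mem_Icc_hasDerivWithinAt₀
    (t₀ := ⟨a, le_rfl, hab⟩) (x₀ := x₀) (a := C * ⟨b - a, sub_nonneg.2 hab⟩) (L := C)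
    { lipschitzOnWith := fun t _ => (hlip t).lipschitzOnWith
      continuousOn := fun x _ => (hcont x).continuousOn
      norm_le := fun t _ x _ => hbdd t x
      mul_max_le := by simp [hab]; rfl }

lemma Function.Periodic.hasDerivAt_of_hasDerivWithinAt_Icc {φ φ' : ℝ → E} {T : ℝ}
    (hT : 0 < T) (hφ : Periodic φ T) (hφ' : Periodic φ' T)
    (h : ∀ t ∈ Icc 0 T, HasDerivWithinAt φ (φ' t) (Icc 0 T) t) (t : ℝ) :
    HasDerivAt φ (φ' t) t := by
  have hIco : ∀ s ∈ Ico 0 T, HasDerivAt φ (φ' s) s := by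
    rintro s ⟨hs0, hsT⟩
    rcases hs0.eq_or_lt with rfl | hs0
    · have hleft : HasDerivWithinAt φ (φ' 0) (Icc (-T) 0) 0 := by
        have hshift : HasDerivWithinAt (· + T) (1 : ℝ) (Icc (-T) 0) 0 :=
          ((hasDerivAt_id' 0).add_const T).hasDerivWithinAt
        have := (h T ⟨hT.le, le_rfl⟩).scomp_of_eq 0 hshift
          (fun u hu => ⟨by linarith [hu.1], by linarith [hu.2]⟩) (zero_add T).symm
        simpa [comp_def, hφ _, ← hφ'.eq] using this
      have hnhds : Icc (-T) 0 ∪ Icc 0 T ∈ 𝓝 (0 : ℝ) := by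
        rw [Icc_union_Icc_eq_Icc (by linarith) hT.le]
        exact Icc_mem_nhds (by linarith) hT
      exact (hleft.union (h 0 ⟨le_rfl, hT.le⟩)).hasDerivAt hnhds
    · exact (h s ⟨hs0.le, hsT.le⟩).hasDerivAt (Icc_mem_nhds hs0 hsT)
  have h₀ := hIco _ (toIcoMod_mem_Ico' hT t)
  rw [← self_sub_toIcoDiv_zsmul] at h₀
  simpa only [hφ.sub_zsmul_eq, hφ'.sub_zsmul_eq] using h₀.comp_sub_const

lemma exists_periodic_extension {F : ℝ → E → E} {α : ℝ → E} {T : ℝ} (hT : 0 < T)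
    (hF : Periodic F T) (hα : ∀ t ∈ Icc 0 T, HasDerivWithinAt α (F t (α t)) (Icc 0 T) t)
    (hαT : α T = α 0) :
    ∃ φ : ℝ → E, Periodic φ T ∧ EqOn φ α (Icc 0 T) ∧ ∀ t, HasDerivAt φ (F t (φ t)) t := by
  set φ : ℝ → E := fun t => α (toIcoMod hT 0 t)
  have hφ : Periodic φ T := fun t => by simp only [φ, toIcoMod_add_right]
  have hφα : EqOn φ α (Icc 0 T) := by
    rintro t ⟨ht0, htT⟩
    rcases htT.lt_or_eq with htT | rfl
    · simp only [φ, (toIcoMod_eq_self hT).2 ⟨ht0, by simpa using htT⟩]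
    · simpa [φ, hαT] using congrArg α (toIcoMod_apply_right hT 0)
  refine ⟨φ, hφ, hφα, hφ.hasDerivAt_of_hasDerivWithinAt_Icc hT (fun t => ?_) fun t ht => ?_⟩
  · simp only [hF t, hφ t]
  · rw [hφα ht]
    exact (hα t ht).congr hφα (hφα ht)

end ODE

lemma image_le_of_deriv_lt_deriv_boundary_Icc {f f' B B' : ℝ → ℝ} {a b : ℝ}
    (hf : ∀ t ∈ Icc a b, HasDerivWithinAt f (f' t) (Icc a b) t)
    (hB : ∀ t ∈ Icc a b, HasDerivWithinAt B (B' t) (Icc a b) t) (ha : f a ≤ B a)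
    (bound : ∀ t ∈ Ico a b, f t = B t → f' t < B' t) : ∀ t ∈ Icc a b, f t ≤ B t :=
  image_le_of_deriv_right_lt_deriv_boundary' (fun t ht => (hf t ht).continuousWithinAt)
    (fun t ht => (hf t (Ico_subset_Icc_self ht)).Ici_of_Icc ht) ha
    (fun t ht => (hB t ht).continuousWithinAt)
    (fun t ht => (hB t (Ico_subset_Icc_self ht)).Ici_of_Icc ht) bound

lemma exists_periodic_solution_of_endpoints {F : ℝ → ℝ → ℝ} {K C : ℝ≥0} {T lo hi : ℝ}
    (hT : 0 < T) (hF : Periodic F T) (hlip : ∀ t, LipschitzWith K (F t))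
    (hcont : ∀ x, Continuous (F · x)) (hbdd : ∀ t x, ‖F t x‖ ≤ C) (hlohi : lo ≤ hi)
    (hlo : ∀ α : ℝ → ℝ, α 0 = lo →
      (∀ t ∈ Icc 0 T, HasDerivWithinAt α (F t (α t)) (Icc 0 T) t) → lo ≤ α T)
    (hhi : ∀ α : ℝ → ℝ, α 0 = hi →
      (∀ t ∈ Icc 0 T, HasDerivWithinAt α (F t (α t)) (Icc 0 T) t) → α T ≤ hi) :
    ∃ φ : ℝ → ℝ, Periodic φ T ∧ φ 0 ∈ Icc lo hi ∧ ∀ t, HasDerivAt φ (F t (φ t)) t := by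
  choose sol hsol₀ hsol using fun a =>
    exists_forall_mem_Icc_hasDerivWithinAt_of_lipschitzWith hT.le hlip hcont hbdd a
  have hflow : LipschitzWith ⟨Real.exp (K * T), (Real.exp_pos _).le⟩ fun a => sol a T := by
    refine LipschitzWith.of_dist_le_mul fun a b => ?_
    have := dist_le_of_trajectories_ODE hlip (fun t ht => (hsol a t ht).continuousWithinAt)
      (fun t ht => (hsol a t (Ico_subset_Icc_self ht)).Ici_of_Icc ht)
      (fun t ht => (hsol b t ht).continuousWithinAt)
      (fun t ht => (hsol b t (Ico_subset_Icc_self ht)).Ici_of_Icc ht)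
      (by rw [hsol₀, hsol₀]) T ⟨hT.le, le_rfl⟩
    change _ ≤ Real.exp (K * T) * dist a b
    simpa [mul_comm] using this
  obtain ⟨a, ha, hfix⟩ : ∃ a ∈ Icc lo hi, sol a T - a = 0 :=
    intermediate_value_Icc' hlohi (hflow.continuous.sub continuous_id).continuousOn
      ⟨sub_nonpos.2 (hhi _ (hsol₀ hi) (hsol hi)), sub_nonneg.2 (hlo _ (hsol₀ lo) (hsol lo))⟩
  obtain ⟨φ, hφT, hφa, hφ⟩ :=
    exists_periodic_extension hT hF (hsol a) (by rw [hsol₀, sub_eq_zero.1 hfix])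
  exact ⟨φ, hφT, by rwa [hφa ⟨le_rfl, hT.le⟩, hsol₀], hφ⟩

lemma integral_div_eq_zero_of_hasDerivAt {v v' : ℝ → ℝ} {a b : ℝ}
    (hv : ∀ t, HasDerivAt v (v' t) t) (hv' : Continuous v') (hv0 : ∀ t, v t ≠ 0)
    (hab : v b = v a) : ∫ t in a..b, v' t / v t = 0 := by
  have hlog : ∀ t, HasDerivAt (fun s => Real.log (v s)) (v' t / v t) t := fun t =>
    (hv t).log (hv0 t)
  have hvc : Continuous v := continuous_of_forall_hasDerivAt hv
  rw [intervalIntegral.integral_eq_sub_of_hasDerivAt (fun t _ => hlog t)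
    ((hv'.div hvc hv0).intervalIntegrable _ _), hab, sub_self]

lemma integral_neg_of_mul_lt_deriv {v v' e : ℝ → ℝ} {a b : ℝ} (hab : a < b)
    (hv : ∀ t, HasDerivAt v (v' t) t) (hv' : Continuous v') (he : Continuous e)
    (hv0 : ∀ t, 0 < v t) (hvab : v b = v a) (h : ∀ t, e t * v t < v' t) :
    ∫ t in a..b, e t < 0 := by
  have hvc : Continuous v := continuous_of_forall_hasDerivAt hv
  calc ∫ t in a..b, e t
      < ∫ t in a..b, v' t / v t :=
        intervalIntegral.integral_lt_integral_of_continuousOn_of_le_of_exists_lt hab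
          he.continuousOn (hv'.div hvc fun t => (hv0 t).ne').continuousOn
          (fun t _ => ((lt_div_iff₀ (hv0 t)).2 (h t)).le)
          ⟨a, left_mem_Icc.2 hab.le, (lt_div_iff₀ (hv0 a)).2 (h a)⟩
    _ = 0 := integral_div_eq_zero_of_hasDerivAt hv hv' (fun t => (hv0 t).ne') hvab

lemma integral_pos_of_deriv_lt_mul {v v' e : ℝ → ℝ} {a b : ℝ} (hab : a < b)
    (hv : ∀ t, HasDerivAt v (v' t) t) (hv' : Continuous v') (he : Continuous e)
    (hv0 : ∀ t, 0 < v t) (hvab : v b = v a) (h : ∀ t, v' t < e t * v t) :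
    0 < ∫ t in a..b, e t := by
  have hvc : Continuous v := continuous_of_forall_hasDerivAt hv
  calc (0 : ℝ)
      = ∫ t in a..b, v' t / v t :=
        (integral_div_eq_zero_of_hasDerivAt hv hv' (fun t => (hv0 t).ne') hvab).symm
    _ < ∫ t in a..b, e t :=
        intervalIntegral.integral_lt_integral_of_continuousOn_of_le_of_exists_lt hab
          (hv'.div hvc fun t => (hv0 t).ne').continuousOn he.continuousOn
          (fun t _ => ((div_lt_iff₀ (hv0 t)).2 (h t)).le)
          ⟨a, left_mem_Icc.2 hab.le, (div_lt_iff₀ (hv0 a)).2 (h a)⟩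

lemma lipschitzOnWith_sq_add_const (R : ℝ≥0) (c : ℝ) :
    LipschitzOnWith (2 * R) (fun x : ℝ => x ^ 2 + c) (Icc (-R) R) := by
  refine LipschitzOnWith.of_dist_le_mul fun x hx y hy => ?_
  rw [Real.dist_eq, Real.dist_eq, show x ^ 2 + c - (y ^ 2 + c) = (x + y) * (x - y) by ring,
    abs_mul]
  have hxy : |x + y| ≤ 2 * R := by
    rw [abs_le]; constructor <;> linarith [hx.1, hx.2, hy.1, hy.2]
  push_cast
  exact mul_le_mul_of_nonneg_right hxy (abs_nonneg _)

def IsRiccatiSolution (γ x : ℝ → ℝ) : Prop := ∀ t, HasDerivAt x (x t ^ 2 + γ t) t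

namespace IsRiccatiSolution

variable {γ x y : ℝ → ℝ}

lemma continuous (hx : IsRiccatiSolution γ x) : Continuous x :=
  continuous_of_forall_hasDerivAt hx

lemma reflect (hx : IsRiccatiSolution γ x) :
    IsRiccatiSolution (fun t => γ (-t)) (fun t => -x (-t)) := fun t => by
  simpa using (hx (-t)).neg_comp_neg

lemma eq_of_periodic {T t₀ : ℝ} (hT : T ≠ 0) (hx : IsRiccatiSolution γ x)
    (hy : IsRiccatiSolution γ y) (hxT : Periodic x T) (hyT : Periodic y T) (h : x t₀ = y t₀) :
    x = y := by
  obtain ⟨Rx, hRx⟩ := hxT.exists_abs_le hT hx.continuous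
  obtain ⟨Ry, hRy⟩ := hyT.exists_abs_le hT hy.continuous
  have hmem {z : ℝ → ℝ} {Rz : ℝ≥0} (hRz : Rz ≤ max Rx Ry) (hz : ∀ t, |z t| ≤ Rz) (t : ℝ) :
      z t ∈ Icc (-(max Rx Ry : ℝ≥0) : ℝ) (max Rx Ry) :=
    abs_le.1 ((hz t).trans (by exact_mod_cast hRz))
  exact ODE_solution_unique_univ (fun t => lipschitzOnWith_sq_add_const (max Rx Ry) (γ t))
    (fun t => ⟨hx t, hmem (le_max_left _ _) hRx t⟩)
    (fun t => ⟨hy t, hmem (le_max_right _ _) hRy t⟩) h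

variable {p p' : ℝ → ℝ} {a b : ℝ}

lemma integral_add_eq_zero (hx : IsRiccatiSolution γ x) (hy : IsRiccatiSolution γ y)
    (hxy : ∀ t, x t ≠ y t) (hxab : x b = x a) (hyab : y b = y a) :
    (∫ t in a..b, x t) + ∫ t in a..b, y t = 0 := by
  have hv : ∀ t, HasDerivAt (fun s => y s - x s) ((x t + y t) * (y t - x t)) t := fun t =>
    ((hy t).sub (hx t)).congr_deriv (by ring)
  have h₀ := integral_div_eq_zero_of_hasDerivAt (a := a) (b := b) hv
    (by have := hx.continuous; have := hy.continuous; fun_prop)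
    (fun t => sub_ne_zero.2 (hxy t).symm) (by rw [hxab, hyab])
  rw [← intervalIntegral.integral_add (hx.continuous.intervalIntegrable _ _)
    (hy.continuous.intervalIntegrable _ _), ← h₀]
  refine intervalIntegral.integral_congr fun t _ => ?_
  field_simp [sub_ne_zero.2 (hxy t).symm]

lemma integral_add_neg_of_lt (hx : IsRiccatiSolution γ x) (hγ : Continuous γ)
    (hp : ∀ t, HasDerivAt p (p' t) t) (hp' : Continuous p') (hpγ : ∀ t, p t ^ 2 + γ t < p' t)
    (hab : a < b) (hxp : ∀ t, x t < p t) (hxab : x b = x a) (hpab : p b = p a) :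
    (∫ t in a..b, x t) + ∫ t in a..b, p t < 0 := by
  have hpc : Continuous p := continuous_of_forall_hasDerivAt hp
  rw [← intervalIntegral.integral_add (hx.continuous.intervalIntegrable _ _)
    (hpc.intervalIntegrable _ _)]
  exact integral_neg_of_mul_lt_deriv (v := fun s => p s - x s) hab (fun t => (hp t).sub (hx t))
    (by have := hx.continuous; fun_prop) (by have := hx.continuous; fun_prop)
    (fun t => sub_pos.2 (hxp t)) (by rw [hxab, hpab]) fun t => by nlinarith [hpγ t]

lemma integral_add_pos_of_gt (hx : IsRiccatiSolution γ x) (hγ : Continuous γ)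
    (hp : ∀ t, HasDerivAt p (p' t) t) (hp' : Continuous p') (hpγ : ∀ t, p t ^ 2 + γ t < p' t)
    (hab : a < b) (hpx : ∀ t, p t < x t) (hxab : x b = x a) (hpab : p b = p a) :
    0 < (∫ t in a..b, x t) + ∫ t in a..b, p t := by
  have hpc : Continuous p := continuous_of_forall_hasDerivAt hp
  rw [← intervalIntegral.integral_add (hx.continuous.intervalIntegrable _ _)
    (hpc.intervalIntegrable _ _)]
  exact integral_pos_of_deriv_lt_mul (v := fun s => x s - p s) hab (fun t => (hx t).sub (hp t))
    (by have := hx.continuous; fun_prop) (by have := hx.continuous; fun_prop)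
    (fun t => sub_pos.2 (hpx t)) (by rw [hxab, hpab]) fun t => by nlinarith [hpγ t]

lemma lt_of_le (hx : IsRiccatiSolution γ x) (hp : ∀ t, HasDerivAt p (p' t) t)
    (hpγ : ∀ t, p t ^ 2 + γ t < p' t) (hxp : ∀ t, x t ≤ p t) (t : ℝ) : x t < p t := by
  refine (hxp t).lt_of_ne fun heq => ?_
  have hmin : IsLocalMin (fun s => p s - x s) t :=
    Eventually.of_forall fun s => by simp only [heq, sub_self, sub_nonneg, hxp s]
  have := hmin.hasDerivAt_eq_zero ((hp t).sub (hx t))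
  rw [heq] at this
  linarith [hpγ t]

end IsRiccatiSolution

def riccatiTrunc (γ : ℝ → ℝ) (R : ℝ≥0) (t x : ℝ) : ℝ := max (-R : ℝ) (min R x) ^ 2 + γ t

section riccatiTrunc

variable {γ : ℝ → ℝ} {R : ℝ≥0}

lemma riccatiTrunc_of_abs_le {t x : ℝ} (hx : |x| ≤ R) : riccatiTrunc γ R t x = x ^ 2 + γ t := by
  rw [riccatiTrunc, min_eq_right (abs_le.1 hx).2, max_eq_right (abs_le.1 hx).1]

lemma lipschitzWith_riccatiTrunc (t : ℝ) : LipschitzWith (2 * R) (riccatiTrunc γ R t) := by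
  have hR : (-R : ℝ) ≤ R := by simp
  have hclamp := (LipschitzWith.subtype_val _).comp (LipschitzWith.projIcc hR)
  have h := (lipschitzOnWith_sq_add_const R (γ t)).comp hclamp.lipschitzOnWith
    (s := univ) fun x _ => Subtype.mem _
  rw [mul_one, mul_one, lipschitzOnWith_univ] at h
  exact h

lemma periodic_riccatiTrunc {T : ℝ} (hγ : Periodic γ T) : Periodic (riccatiTrunc γ R) T :=
  fun t => by ext x; simp only [riccatiTrunc, hγ t]

lemma continuous_riccatiTrunc (hγ : Continuous γ) (x : ℝ) : Continuous (riccatiTrunc γ R · x) :=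
  continuous_const.add hγ

lemma norm_riccatiTrunc_le {Γ : ℝ≥0} (hΓ : ∀ t, |γ t| ≤ Γ) (t x : ℝ) :
    ‖riccatiTrunc γ R t x‖ ≤ ↑(R ^ 2 + Γ) := by
  have hclamp : |max (-R : ℝ) (min R x)| ≤ R := abs_le.2 ⟨le_max_left _ _, by simp⟩
  rw [Real.norm_eq_abs, riccatiTrunc]
  push_cast
  calc |max (-R : ℝ) (min R x) ^ 2 + γ t| ≤ |max (-R : ℝ) (min R x) ^ 2| + |γ t| :=
        abs_add_le _ _
    _ ≤ R ^ 2 + Γ := by rw [abs_pow]; gcongr; exact hΓ t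

variable {α : ℝ → ℝ} {a b : ℝ}

lemma neg_le_of_hasDerivWithinAt_riccatiTrunc (hRγ : ∀ t, 0 < (R : ℝ) ^ 2 + γ t)
    (hα : ∀ t ∈ Icc a b, HasDerivWithinAt α (riccatiTrunc γ R t (α t)) (Icc a b) t)
    (h₀ : -R ≤ α a) : ∀ t ∈ Icc a b, -R ≤ α t :=
  image_le_of_deriv_lt_deriv_boundary_Icc (f' := fun _ => 0)
    (fun t _ => hasDerivWithinAt_const _ _ _) hα h₀ fun t _ ht => by
      rw [← ht, riccatiTrunc_of_abs_le (by simp), neg_sq]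
      exact hRγ t

lemma le_of_hasDerivWithinAt_riccatiTrunc {p p' : ℝ → ℝ} (hp : ∀ t, HasDerivAt p (p' t) t)
    (hpγ : ∀ t, p t ^ 2 + γ t < p' t) (hpR : ∀ t, |p t| ≤ R)
    (hα : ∀ t ∈ Icc a b, HasDerivWithinAt α (riccatiTrunc γ R t (α t)) (Icc a b) t)
    (h₀ : α a ≤ p a) : ∀ t ∈ Icc a b, α t ≤ p t :=
  image_le_of_deriv_lt_deriv_boundary_Icc hα (fun t _ => (hp t).hasDerivWithinAt) h₀
    fun t _ ht => by
      rw [ht, riccatiTrunc_of_abs_le (hpR t)]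
      exact hpγ t

end riccatiTrunc

section Existence

variable {γ p p' : ℝ → ℝ} {T : ℝ}

lemma exists_riccatiSolution_lt (hT : 0 < T) (hγ : Continuous γ) (hγT : Periodic γ T)
    (hp : ∀ t, HasDerivAt p (p' t) t) (hpT : Periodic p T) (hpγ : ∀ t, p t ^ 2 + γ t < p' t) :
    ∃ φ, IsRiccatiSolution γ φ ∧ Periodic φ T ∧ ∀ t, φ t < p t := by
  obtain ⟨Γ, hΓ⟩ := hγT.exists_abs_le hT.ne' hγ
  obtain ⟨M, hM⟩ := hpT.exists_abs_le hT.ne'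
    (continuous_of_forall_hasDerivAt hp)
  set R : ℝ≥0 := M + Γ + 1
  have hR : (R : ℝ) = M + Γ + 1 := by simp [R]
  have hpR : ∀ t, |p t| ≤ R := fun t => by linarith [hM t, Γ.coe_nonneg]
  have hRγ : ∀ t, 0 < (R : ℝ) ^ 2 + γ t := fun t => by
    nlinarith [(abs_le.1 (hΓ t)).1, M.coe_nonneg, Γ.coe_nonneg]
  obtain ⟨φ, hφT, hφ₀, hφ⟩ := exists_periodic_solution_of_endpoints hT (periodic_riccatiTrunc hγT)
    lipschitzWith_riccatiTrunc (continuous_riccatiTrunc hγ) (norm_riccatiTrunc_le hΓ)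
    (abs_le.1 (hpR 0)).1
    (fun α h₀ hα => neg_le_of_hasDerivWithinAt_riccatiTrunc hRγ hα h₀.ge T ⟨hT.le, le_rfl⟩)
    (fun α h₀ hα => (le_of_hasDerivWithinAt_riccatiTrunc hp hpγ hpR hα h₀.le T
      ⟨hT.le, le_rfl⟩).trans_eq hpT.eq)
  have hφIcc : ∀ t ∈ Icc 0 T, HasDerivWithinAt φ (riccatiTrunc γ R t (φ t)) (Icc 0 T) t :=
    fun t _ => (hφ t).hasDerivWithinAt
  have hφp : ∀ t, -R ≤ φ t ∧ φ t ≤ p t := fun t => by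
    rw [← hφT.apply_toIcoMod hT, ← hpT.apply_toIcoMod hT]
    have ht := Ico_subset_Icc_self (toIcoMod_mem_Ico' hT t)
    exact ⟨neg_le_of_hasDerivWithinAt_riccatiTrunc hRγ hφIcc hφ₀.1 _ ht,
      le_of_hasDerivWithinAt_riccatiTrunc hp hpγ hpR hφIcc hφ₀.2 _ ht⟩
  have hφR : IsRiccatiSolution γ φ := fun t => by
    rw [← riccatiTrunc_of_abs_le (R := R)
      (abs_le.2 ⟨(hφp t).1, (hφp t).2.trans (abs_le.1 (hpR t)).2⟩)]
    exact hφ t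
  exact ⟨φ, hφR, hφT, hφR.lt_of_le hp hpγ fun t => (hφp t).2⟩

lemma exists_riccatiSolution_gt (hT : 0 < T) (hγ : Continuous γ) (hγT : Periodic γ T)
    (hp : ∀ t, HasDerivAt p (p' t) t) (hpT : Periodic p T) (hpγ : ∀ t, p t ^ 2 + γ t < p' t) :
    ∃ φ, IsRiccatiSolution γ φ ∧ Periodic φ T ∧ ∀ t, p t < φ t := by
  obtain ⟨ψ, hψ, hψT, hψp⟩ := exists_riccatiSolution_lt (p := fun t => -p (-t))
    (p' := fun t => p' (-t)) hT (hγ.comp continuous_neg) hγT.comp_neg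
    (fun t => (hp (-t)).neg_comp_neg) (hpT.comp_neg.comp Neg.neg)
    (fun t => by simpa using hpγ (-t))
  refine ⟨fun t => -ψ (-t), by simpa using hψ.reflect, hψT.comp_neg.comp Neg.neg,
    fun t => ?_⟩
  have := hψp (-t)
  rw [neg_neg] at this
  linarith

end Existence

theorem stmt_7 (T : ℝ) (hT : 0 < T) (γ : ℝ → ℝ) (hγc : Continuous γ)
    (hγp : Function.Periodic γ T)
    (p : ℝ → ℝ) (hp : ContDiff ℝ 1 p) (hpper : Function.Periodic p T)
    (hineq : ∀ t, deriv p t > p t ^ 2 + γ t) :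
    ∃ φm φp : ℝ → ℝ,
      (∀ t, HasDerivAt φm (φm t ^ 2 + γ t) t) ∧ Function.Periodic φm T ∧
      (∀ t, HasDerivAt φp (φp t ^ 2 + γ t) t) ∧ Function.Periodic φp T ∧
      (∀ t, φm t < p t ∧ p t < φp t) ∧
      (∫ t in (0:ℝ)..T, φm t) < 0 ∧ 0 < (∫ t in (0:ℝ)..T, φp t) ∧
      (∀ χ : ℝ → ℝ, (∀ t, HasDerivAt χ (χ t ^ 2 + γ t) t) → Function.Periodic χ T →
        χ = φm ∨ χ = φp) := by
  have hp' : ∀ t, HasDerivAt p (deriv p t) t := fun t =>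
    (hp.differentiable one_ne_zero t).hasDerivAt
  have hp'c : Continuous (deriv p) := hp.continuous_deriv le_rfl
  obtain ⟨φm, hφm, hφmT, hφmp⟩ := exists_riccatiSolution_lt hT hγc hγp hp' hpper hineq
  obtain ⟨φp, hφp, hφpT, hpφp⟩ := exists_riccatiSolution_gt hT hγc hγp hp' hpper hineq
  have hIm := hφm.integral_add_neg_of_lt hγc hp' hp'c hineq hT hφmp hφmT.eq hpper.eq
  have hIp := hφp.integral_add_pos_of_gt hγc hp' hp'c hineq hT hpφp hφpT.eq hpper.eq
  have hImp := hφm.integral_add_eq_zero hφp (fun t => ((hφmp t).trans (hpφp t)).ne)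
    hφmT.eq hφpT.eq
  refine ⟨φm, φp, hφm, hφmT, hφp, hφpT, fun t => ⟨hφmp t, hpφp t⟩, by linarith, by linarith,
    fun χ (hχ : IsRiccatiSolution γ χ) hχT => ?_⟩
  by_contra! hne
  have hχm := hχ.integral_add_eq_zero hφm
    (fun t h => hne.1 (hχ.eq_of_periodic hT.ne' hφm hχT hφmT h)) hχT.eq hφmT.eq
  have hχp := hχ.integral_add_eq_zero hφp
    (fun t h => hne.2 (hχ.eq_of_periodic hT.ne' hφp hχT hφpT h)) hχT.eq hφpT.eq
  linarith
end

section
/- Let γ: ℝ → ℝ be a continuous T-periodic function with zero average, let q ∈ C¹_{T,0}(ℝ), and set μ := (∫₀ᵀ e^{−2∫₀ᵗ q(s) ds} dt)⁻¹ · ∫₀ᵀ e^{−2∫₀ᵗ q(s) ds} (q(t)² − γ(t)) dt. Then every solution of the linear differential equation y' = 2q(t)y + γ(t) + μ − q(t)² is T-periodic; that is, the general solution y(t,y₀) = e^{2∫₀ᵗ q(s) ds}( y₀ + μ∫₀ᵗ e^{−2∫₀ˢ q(r) dr} ds + ∫₀ᵗ e^{−2∫₀ˢ q(r) dr}(γ(s)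 − q(s)²) ds ) satisfies y(T, y₀) = y₀ for every y₀ ∈ ℝ. -/
/-!
Multiplying `y' = a y + b` by the integrating factor `E = exp (-∫₀ᵗ a)` gives `(E y)' = E b`.
With `a = 2q` the average-zero condition on `q` gives `E(T) = E(0) = 1`, and `μ` is exactly the
constant that makes `∫₀ᵀ E (γ + μ - q²) = 0`; hence every solution satisfies `y(T) = y(0)`. Since
the coefficients are `T`-periodic, `y(· + T) - y` solves the homogeneous equation and vanishes at
`0`, so it vanishes identically.
-/

open Real intervalIntegral Function

noncomputable def integratingFactor (a : ℝ → ℝ) (t : ℝ) : ℝ :=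
  exp (-∫ s in (0:ℝ)..t, a s)

section IntegratingFactor

variable {a b y : ℝ → ℝ} {T : ℝ}

lemma integratingFactor_pos (t : ℝ) : 0 < integratingFactor a t := exp_pos _

lemma integratingFactor_zero : integratingFactor a 0 = 1 := by
  simp [integratingFactor]

lemma integratingFactor_eq_one_of_integral_eq_zero (h : ∫ t in (0:ℝ)..T, a t = 0) :
    integratingFactor a T = 1 := by
  simp [integratingFactor, h]

lemma hasDerivAt_integratingFactor (ha : Continuous a) (t : ℝ) :
    HasDerivAt (integratingFactor a) (integratingFactor a t * -a t) t :=
  (ha.integral_hasStrictDerivAt 0 t).hasDerivAt.neg.exp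

lemma continuous_integratingFactor (ha : Continuous a) : Continuous (integratingFactor a) :=
  continuous_iff_continuousAt.2 fun t => (hasDerivAt_integratingFactor ha t).continuousAt

lemma hasDerivAt_integratingFactor_mul (ha : Continuous a)
    (hy : ∀ t, HasDerivAt y (a t * y t + b t) t) (t : ℝ) :
    HasDerivAt (fun u => integratingFactor a u * y u) (integratingFactor a t * b t) t :=
  ((hasDerivAt_integratingFactor ha t).mul (hy t)).congr_deriv (by ring)

lemma integratingFactor_mul_sub_eq_integral (ha : Continuous a) (hb : Continuous b)
    (hy : ∀ t, HasDerivAt y (a t * y t + b t) t) (T : ℝ) :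
    integratingFactor a T * y T - y 0 = ∫ t in (0:ℝ)..T, integratingFactor a t * b t := by
  rw [integral_eq_sub_of_hasDerivAt (fun t _ => hasDerivAt_integratingFactor_mul ha hy t)
    (((continuous_integratingFactor ha).mul hb).intervalIntegrable 0 T),
    integratingFactor_zero, one_mul]

lemma periodic_of_apply_eq_apply_zero (ha : Continuous a) (hap : Periodic a T)
    (hbp : Periodic b T) (hy : ∀ t, HasDerivAt y (a t * y t + b t) t) (hyT : y T = y 0) :
    Periodic y T := by
  set w : ℝ → ℝ := fun t => y (t + T) - y t with hw_def
  have hw : ∀ t, HasDerivAt w (a t * w t + 0) t := by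
    intro t
    have h := ((hy (t + T)).comp_add_const t T).sub (hy t)
    rw [hap t, hbp t] at h
    exact h.congr_deriv (by ring)
  intro t
  have h := integratingFactor_mul_sub_eq_integral ha continuous_const hw t
  simp only [mul_zero, integral_zero, hw_def, zero_add, hyT, sub_self, sub_zero] at h
  exact sub_eq_zero.1 ((mul_eq_zero.1 h).resolve_left (integratingFactor_pos t).ne')

theorem periodic_of_integral_integratingFactor_mul_eq_zero (ha : Continuous a)
    (hb : Continuous b) (hap : Periodic a T) (hbp : Periodic b T)
    (ha0 : ∫ t in (0:ℝ)..T, a t = 0) (hb0 : ∫ t in (0:ℝ)..T, integratingFactor a t * b t = 0)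
    (hy : ∀ t, HasDerivAt y (a t * y t + b t) t) : Periodic y T := by
  refine periodic_of_apply_eq_apply_zero ha hap hbp hy ?_
  have h := integratingFactor_mul_sub_eq_integral ha hb hy T
  rwa [integratingFactor_eq_one_of_integral_eq_zero ha0, hb0, one_mul, sub_eq_zero] at h

end IntegratingFactor

lemma integral_mul_add_const {w f : ℝ → ℝ} {a b : ℝ}
    (hw : IntervalIntegrable w MeasureTheory.volume a b)
    (hwf : IntervalIntegrable (fun t => w t * f t) MeasureTheory.volume a b) (c : ℝ) :
    ∫ t in a..b, w t * (f t + c) = c * (∫ t in a..b, w t) + ∫ t in a..b, w t * f t := by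
  simp only [mul_add, integral_add hwf (hw.mul_const c), integral_mul_const]
  ring

theorem stmt_10_general (T : ℝ) (hT : 0 < T) (γ : ℝ → ℝ) (hγc : Continuous γ)
    (hγp : Function.Periodic γ T)
    (q : ℝ → ℝ) (hq : ContDiff ℝ 1 q) (hqper : Function.Periodic q T)
    (hq0 : (∫ t in (0:ℝ)..T, q t) = 0)
    (μ : ℝ)
    (hμ : μ = (∫ t in (0:ℝ)..T, Real.exp (-2 * ∫ s in (0:ℝ)..t, q s))⁻¹ *
      ∫ t in (0:ℝ)..T, Real.exp (-2 * ∫ s in (0:ℝ)..t, q s) * (q t ^ 2 - γ t)) :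
    -- every solution of the linear equation y' = 2q(t)y + γ(t) + μ − q(t)² is T-periodic
    (∀ y : ℝ → ℝ, (∀ t, HasDerivAt y (2 * q t * y t + γ t + μ - q t ^ 2) t) →
      Function.Periodic y T) ∧
    -- that is, the general solution satisfies y(T, y₀) = y₀ for every y₀
    (∀ y₀ : ℝ,
      Real.exp (2 * ∫ s in (0:ℝ)..T, q s) *
        (y₀ + μ * (∫ s in (0:ℝ)..T, Real.exp (-2 * ∫ r in (0:ℝ)..s, q r)) +
          ∫ s in (0:ℝ)..T, Real.exp (-2 * ∫ r in (0:ℝ)..s, q r) * (γ s - q s ^ 2)) = y₀) := by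
  have hqc : Continuous q := hq.continuous
  set a : ℝ → ℝ := fun t => 2 * q t
  have ha : Continuous a := continuous_const.mul hqc
  set E := integratingFactor a
  have hEc : Continuous E := continuous_integratingFactor ha
  have hE : ∀ s, exp (-2 * ∫ r in (0:ℝ)..s, q r) = E s := fun s => by
    simp [E, a, integratingFactor, integral_const_mul]
  simp only [hE] at hμ ⊢
  have hEi : IntervalIntegrable E MeasureTheory.volume 0 T := hEc.intervalIntegrable 0 T
  have hI : 0 < ∫ t in (0:ℝ)..T, E t :=
    intervalIntegral_pos_of_pos_on hEi (fun t _ => integratingFactor_pos t) hT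
  have hbalance : μ * (∫ t in (0:ℝ)..T, E t) + ∫ t in (0:ℝ)..T, E t * (γ t - q t ^ 2) = 0 := by
    rw [hμ, mul_right_comm, inv_mul_cancel₀ hI.ne', one_mul, ← sub_neg_eq_add, sub_eq_zero,
      ← integral_neg]
    simp only [← mul_neg, neg_sub]
  have hzero : ∫ t in (0:ℝ)..T, E t * (γ t + μ - q t ^ 2) = 0 := by
    simp_rw [add_sub_right_comm _ μ]
    rwa [integral_mul_add_const (f := fun t => γ t - q t ^ 2) hEi
      ((hEc.mul (hγc.sub (hqc.pow 2))).intervalIntegrable 0 T)]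
  refine ⟨fun y hy => ?_, fun y₀ => ?_⟩
  · refine periodic_of_integral_integratingFactor_mul_eq_zero (b := fun t => γ t + μ - q t ^ 2) ha
      (by fun_prop) (fun t => by simp only [a, hqper t]) (fun t => by simp only [hqper t, hγp t])
      (by simp [a, integral_const_mul, hq0]) hzero fun t => ?_
    exact (hy t).congr_deriv (by ring)
  · rw [hq0, mul_zero, exp_zero, one_mul]
    linarith

theorem stmt_10 (T : ℝ) (hT : 0 < T) (γ : ℝ → ℝ) (hγc : Continuous γ)
    (hγp : Function.Periodic γ T) (hγ0 : (∫ t in (0:ℝ)..T, γ t) = 0)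
    (q : ℝ → ℝ) (hq : ContDiff ℝ 1 q) (hqper : Function.Periodic q T)
    (hq0 : (∫ t in (0:ℝ)..T, q t) = 0)
    (μ : ℝ)
    (hμ : μ = (∫ t in (0:ℝ)..T, Real.exp (-2 * ∫ s in (0:ℝ)..t, q s))⁻¹ *
      ∫ t in (0:ℝ)..T, Real.exp (-2 * ∫ s in (0:ℝ)..t, q s) * (q t ^ 2 - γ t)) :
    -- every solution of the linear equation y' = 2q(t)y + γ(t) + μ − q(t)² is T-periodic
    (∀ y : ℝ → ℝ, (∀ t, HasDerivAt y (2 * q t * y t + γ t + μ - q t ^ 2) t) →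
      Function.Periodic y T) ∧
    -- that is, the general solution satisfies y(T, y₀) = y₀ for every y₀
    (∀ y₀ : ℝ,
      Real.exp (2 * ∫ s in (0:ℝ)..T, q s) *
        (y₀ + μ * (∫ s in (0:ℝ)..T, Real.exp (-2 * ∫ r in (0:ℝ)..s, q r)) +
          ∫ s in (0:ℝ)..T, Real.exp (-2 * ∫ r in (0:ℝ)..s, q r) * (γ s - q s ^ 2)) = y₀) :=
  stmt_10_general T hT γ hγc hγp q hq hqper hq0 μ hμ
end

section
/- Let γ: ℝ → ℝ be a continuous T-periodic function with zero average and let φ be a continuously differentiable T-periodic function with zero average satisfying φ'(t) = φ(t)² + γ(t) + μ for all t and some μ ∈ ℝ. Then ∫₀ᵀ e^{−2∫₀ᵗ φ(s) ds} ( φ(t)² − γ(t) − μ ) dt = 0; equivalently, μ = (∫₀ᵀ e^{−2∫₀ᵗ φ(s) ds} dt)⁻¹ · ∫₀ᵀ e^{−2∫₀ᵗ φ(s) ds} (φ(t)² − γ(t)) dt. In particular, ∫₀ᵀ e^{−2∫₀ᵗ φ(s) ds} φ'(t) dt = 2∫₀ᵀ e^{−2∫₀ᵗ φ(s) ds} φ(t)²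 dt. -/
/-!
With `F t = exp (-2 ∫₀ᵗ φ)` one has `(F φ)' = F (φ' - 2 φ²)`, and by the Riccati equation
`φ' - 2 φ² = γ + μ - φ²`. Since `φ` has zero average, `F 0 = F T = 1`, so periodicity of `φ`
makes the boundary term `F T φ T - F 0 φ 0` vanish. Dividing by `∫₀ᵀ F > 0` gives the formula for `μ`.
-/

open Real intervalIntegral Function

noncomputable def riccatiWeight (φ : ℝ → ℝ) (t : ℝ) : ℝ :=
  exp (-2 * ∫ s in (0:ℝ)..t, φ s)

section RiccatiWeight

variable {φ : ℝ → ℝ}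

theorem hasDerivAt_riccatiWeight (hφ : Continuous φ) (t : ℝ) :
    HasDerivAt (riccatiWeight φ) (riccatiWeight φ t * (-2 * φ t)) t :=
  ((hφ.integral_hasStrictDerivAt 0 t).hasDerivAt.const_mul (-2)).exp

theorem continuous_riccatiWeight (hφ : Continuous φ) : Continuous (riccatiWeight φ) :=
  continuous_iff_continuousAt.2 fun t => (hasDerivAt_riccatiWeight hφ t).continuousAt

theorem riccatiWeight_eq_one_of_integral_eq_zero {T : ℝ} (h : ∫ t in (0:ℝ)..T, φ t = 0) :
    riccatiWeight φ T = 1 := by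
  simp [riccatiWeight, h]

theorem integral_riccatiWeight_mul_deriv_sub {φ' : ℝ → ℝ} (hφ : ∀ t, HasDerivAt φ (φ' t) t)
    (hφ' : Continuous φ') (a b : ℝ) :
    ∫ t in a..b, riccatiWeight φ t * (φ' t - 2 * φ t ^ 2) =
      riccatiWeight φ b * φ b - riccatiWeight φ a * φ a := by
  have hφc : Continuous φ := continuous_iff_continuousAt.2 fun t => (hφ t).continuousAt
  refine integral_eq_sub_of_hasDerivAt (f := fun t => riccatiWeight φ t * φ t) (fun t _ => ?_) ?_
  · exact ((hasDerivAt_riccatiWeight hφc t).mul (hφ t)).congr_deriv (by ring)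
  · exact ((continuous_riccatiWeight hφc).mul
      (hφ'.sub (continuous_const.mul (hφc.pow 2)))).intervalIntegrable a b

theorem integral_riccatiWeight_mul_deriv_sub_eq_zero {φ' : ℝ → ℝ} {T : ℝ}
    (hφ : ∀ t, HasDerivAt φ (φ' t) t) (hφ' : Continuous φ') (hφp : Periodic φ T)
    (hφ0 : ∫ t in (0:ℝ)..T, φ t = 0) :
    ∫ t in (0:ℝ)..T, riccatiWeight φ t * (φ' t - 2 * φ t ^ 2) = 0 := by
  rw [integral_riccatiWeight_mul_deriv_sub hφ hφ', riccatiWeight_eq_one_of_integral_eq_zero hφ0,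
    riccatiWeight_eq_one_of_integral_eq_zero integral_same, hφp.eq, sub_self]

end RiccatiWeight

theorem eq_inv_integral_mul_integral_of_integral_mul_sub_eq_zero {w f : ℝ → ℝ} {a b μ : ℝ}
    (hw : IntervalIntegrable w MeasureTheory.volume a b)
    (hwf : IntervalIntegrable (fun t => w t * f t) MeasureTheory.volume a b)
    (hw0 : ∫ t in a..b, w t ≠ 0) (h : ∫ t in a..b, w t * (f t - μ) = 0) :
    μ = (∫ t in a..b, w t)⁻¹ * ∫ t in a..b, w t * f t := by
  simp only [mul_sub] at h
  rw [integral_sub hwf (hw.mul_const μ), integral_mul_const, sub_eq_zero] at h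
  rw [eq_inv_mul_iff_mul_eq₀ hw0, h]

theorem stmt_11_general (T : ℝ) (hT : 0 < T) (γ : ℝ → ℝ) (hγc : Continuous γ)
    (μ : ℝ) (φ : ℝ → ℝ)
    (hφd : ∀ t, HasDerivAt φ (φ t ^ 2 + γ t + μ) t)
    (hφp : Function.Periodic φ T)
    (hφ0 : (∫ t in (0:ℝ)..T, φ t) = 0) :
    (∫ t in (0:ℝ)..T, Real.exp (-2 * ∫ s in (0:ℝ)..t, φ s) * (φ t ^ 2 - γ t - μ)) = 0 ∧
    μ = (∫ t in (0:ℝ)..T, Real.exp (-2 * ∫ s in (0:ℝ)..t, φ s))⁻¹ *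
      ∫ t in (0:ℝ)..T, Real.exp (-2 * ∫ s in (0:ℝ)..t, φ s) * (φ t ^ 2 - γ t) ∧
    (∫ t in (0:ℝ)..T, Real.exp (-2 * ∫ s in (0:ℝ)..t, φ s) * deriv φ t) =
      2 * ∫ t in (0:ℝ)..T, Real.exp (-2 * ∫ s in (0:ℝ)..t, φ s) * φ t ^ 2 := by
  have hφc : Continuous φ := continuous_iff_continuousAt.2 fun t => (hφd t).continuousAt
  have hF := continuous_riccatiWeight hφc
  have hFint : ∀ g : ℝ → ℝ, Continuous g →
      IntervalIntegrable (fun t => riccatiWeight φ t * g t) MeasureTheory.volume 0 T :=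
    fun g hg => (hF.mul hg).intervalIntegrable 0 T
  have key : ∫ t in (0:ℝ)..T, riccatiWeight φ t * (φ t ^ 2 + γ t + μ - 2 * φ t ^ 2) = 0 :=
    integral_riccatiWeight_mul_deriv_sub_eq_zero hφd (by fun_prop) hφp hφ0
  have h1 : ∫ t in (0:ℝ)..T, riccatiWeight φ t * (φ t ^ 2 - γ t - μ) = 0 := by
    rw [← neg_eq_zero, ← integral_neg, ← key]
    congr 1 with t
    ring
  have hFpos : 0 < ∫ t in (0:ℝ)..T, riccatiWeight φ t :=
    intervalIntegral_pos_of_pos (hF.intervalIntegrable 0 T) (fun _ => exp_pos _) hT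
  refine ⟨h1, eq_inv_integral_mul_integral_of_integral_mul_sub_eq_zero (hF.intervalIntegrable 0 T)
    (hFint (fun t => φ t ^ 2 - γ t) (by fun_prop)) hFpos.ne' h1, ?_⟩
  calc ∫ t in (0:ℝ)..T, riccatiWeight φ t * deriv φ t
      = ∫ t in (0:ℝ)..T, (riccatiWeight φ t * (φ t ^ 2 + γ t + μ - 2 * φ t ^ 2)
          + 2 * (riccatiWeight φ t * φ t ^ 2)) := by
        congr 1 with t
        rw [(hφd t).deriv]
        ring
    _ = 2 * ∫ t in (0:ℝ)..T, riccatiWeight φ t * φ t ^ 2 := by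
        rw [integral_add (hFint (fun t => φ t ^ 2 + γ t + μ - 2 * φ t ^ 2) (by fun_prop))
            ((hFint (fun t => φ t ^ 2) (by fun_prop)).const_mul 2),
          key, zero_add, integral_const_mul]

theorem stmt_11 (T : ℝ) (hT : 0 < T) (γ : ℝ → ℝ) (hγc : Continuous γ)
    (hγp : Function.Periodic γ T) (hγ0 : (∫ t in (0:ℝ)..T, γ t) = 0)
    (μ : ℝ) (φ : ℝ → ℝ)
    (hφd : ∀ t, HasDerivAt φ (φ t ^ 2 + γ t + μ) t)
    (hφp : Function.Periodic φ T)
    (hφ0 : (∫ t in (0:ℝ)..T, φ t) = 0) :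
    (∫ t in (0:ℝ)..T, Real.exp (-2 * ∫ s in (0:ℝ)..t, φ s) * (φ t ^ 2 - γ t - μ)) = 0 ∧
    μ = (∫ t in (0:ℝ)..T, Real.exp (-2 * ∫ s in (0:ℝ)..t, φ s))⁻¹ *
      ∫ t in (0:ℝ)..T, Real.exp (-2 * ∫ s in (0:ℝ)..t, φ s) * (φ t ^ 2 - γ t) ∧
    (∫ t in (0:ℝ)..T, Real.exp (-2 * ∫ s in (0:ℝ)..t, φ s) * deriv φ t) =
      2 * ∫ t in (0:ℝ)..T, Real.exp (-2 * ∫ s in (0:ℝ)..t, φ s) * φ t ^ 2 :=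
  stmt_11_general T hT γ hγc μ φ hφd hφp hφ0
end
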